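/- arXiv:0904.2912 — 2 statements merged into one kernel-verified Lean document; each statement's English description precedes it below -/
import Mathlib

section
/- Let λ = (λ_0, …, λ_k) ∈ ℝ^{k+1} and set δ(λ) = min_{i<j} |λ_i − λ_j|. For x in the standard k-simplex, let dv(x) denote the Euclidean distance from x to the nearest vertex e_i of the simplex. Then δ(λ)² · dv(x)² / 2 ≤ ∑_{0 ≤ i < j ≤ k} x_i x_j (λ_i − λ_j)². -/
/-!
Let `m` be a coordinate where `x` is maximal. Then `∑ xᵢ² ≤ xₘ`, so
`dv(x)² ≤ ‖x - eₘ‖² = ∑ xᵢ² - 2xₘ + 1 ≤ 1 - ∑ xᵢ² = 2 ∑_{i<j} xᵢxⱼ`,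
and each `(λᵢ - λⱼ)²` on the right-hand side is at least `δ²`.
-/

open Finset

theorem sq_sum_eq_sum_sq_add_two_mul_sum_lt {ι R : Type*} [Fintype ι] [LinearOrder ι]
    [CommRing R] (f : ι → R) :
    (∑ i, f i) ^ 2 =
      ∑ i, f i ^ 2 + 2 * ∑ p ∈ univ.filter (fun p : ι × ι => p.1 < p.2), f p.1 * f p.2 := by
  have hsplit : ∀ i j, f i * f j = (if i < j then f i * f j else 0) +
      (if j < i then f j * f i else 0) + (if i = j then f i * f j else 0) := by
    intro i j
    rcases lt_trichotomy i j with h | rfl | h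
    · simp [h, h.not_gt, h.ne]
    · simp
    · simp [h, h.not_gt, h.ne', mul_comm]
  have hlt : ∑ p ∈ univ.filter (fun p : ι × ι => p.1 < p.2), f p.1 * f p.2 =
      ∑ i, ∑ j, if i < j then f i * f j else 0 := by
    rw [sum_filter, Fintype.sum_prod_type]
  have hgt : ∑ i, ∑ j, (if j < i then f j * f i else 0) =
      ∑ i, ∑ j, if i < j then f i * f j else 0 := sum_comm
  rw [sq, sum_mul_sum, hlt, sum_congr rfl fun i _ => sum_congr rfl fun j _ => hsplit i j]
  simp only [sum_add_distrib, hgt, sum_ite_eq, mem_univ, if_true, sq]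
  ring

theorem sum_sq_le_mul_sum {ι R : Type*} [Fintype ι] [Semiring R] [PartialOrder R]
    [IsOrderedRing R] {x : ι → R} (hx : ∀ i, 0 ≤ x i) {m : ι} (hm : ∀ i, x i ≤ x m) :
    ∑ i, x i ^ 2 ≤ x m * ∑ i, x i := by
  rw [mul_sum]
  exact sum_le_sum fun i _ => by rw [sq]; exact mul_le_mul_of_nonneg_right (hm i) (hx i)

theorem EuclideanSpace.dist_single_one_sq {ι : Type*} [Fintype ι] [DecidableEq ι]
    (x : EuclideanSpace ℝ ι) (m : ι) :
    dist x (EuclideanSpace.single m 1) ^ 2 = ∑ i, x i ^ 2 - 2 * x m + 1 := by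
  rw [dist_eq_norm, norm_sub_sq_real, EuclideanSpace.real_norm_sq_eq,
    EuclideanSpace.inner_single_right]
  simp

theorem EuclideanSpace.iInf_dist_single_sq_le {ι : Type*} [Fintype ι] [DecidableEq ι]
    [Nonempty ι] {x : EuclideanSpace ℝ ι} (hx : ∀ i, 0 ≤ x i) (hsum : ∑ i, x i = 1) :
    (⨅ i, dist x (EuclideanSpace.single i 1)) ^ 2 ≤ 1 - ∑ i, x i ^ 2 := by
  obtain ⟨m, -, hm⟩ := exists_max_image univ x univ_nonempty
  have hsq := sum_sq_le_mul_sum hx fun i => hm i (mem_univ i)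
  rw [hsum, mul_one] at hsq
  have hinf : ⨅ i, dist x (EuclideanSpace.single i 1) ≤ dist x (EuclideanSpace.single m 1) :=
    ciInf_le ⟨0, by rintro _ ⟨i, rfl⟩; exact dist_nonneg⟩ m
  calc (⨅ i, dist x (EuclideanSpace.single i 1)) ^ 2
      ≤ dist x (EuclideanSpace.single m 1) ^ 2 :=
        pow_le_pow_left₀ (le_ciInf fun _ => dist_nonneg) hinf 2
    _ = ∑ i, x i ^ 2 - 2 * x m + 1 := EuclideanSpace.dist_single_one_sq x m
    _ ≤ 1 - ∑ i, x i ^ 2 := by linarith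

theorem stmt1_general (k : ℕ) (l : Fin (k + 1) → ℝ) (δ : ℝ) (hδ0 : 0 ≤ δ)
    (hδ : ∀ i j : Fin (k + 1), i < j → δ ≤ |l i - l j|)
    (x : EuclideanSpace ℝ (Fin (k + 1))) (hx : ∀ i, 0 ≤ x i) (hsum : ∑ i, x i = 1) :
    δ ^ 2 * (⨅ i : Fin (k + 1), dist x (EuclideanSpace.single i (1 : ℝ))) ^ 2 / 2 ≤
      ∑ p ∈ Finset.univ.filter (fun p : Fin (k + 1) × Fin (k + 1) => p.1 < p.2),
        x p.1 * x p.2 * (l p.1 - l p.2) ^ 2 := by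
  have hpairs := sq_sum_eq_sum_sq_add_two_mul_sum_lt x
  have hdv := EuclideanSpace.iInf_dist_single_sq_le hx hsum
  rw [hsum] at hpairs
  calc δ ^ 2 * (⨅ i, dist x (EuclideanSpace.single i (1 : ℝ))) ^ 2 / 2
      ≤ δ ^ 2 * ∑ p ∈ univ.filter (fun p : Fin (k + 1) × Fin (k + 1) => p.1 < p.2),
          x p.1 * x p.2 := by
        rw [mul_div_assoc]
        gcongr
        linarith
    _ = _ := mul_sum _ _ _
    _ ≤ _ := sum_le_sum fun p hp => by
        have hδp : δ ^ 2 ≤ (l p.1 - l p.2) ^ 2 := by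
          simpa only [sq_abs] using pow_le_pow_left₀ hδ0 (hδ _ _ (mem_filter.1 hp).2) 2
        rw [mul_comm]
        exact mul_le_mul_of_nonneg_left hδp (mul_nonneg (hx _) (hx _))

/-- With `δ(λ) = min_{i<j} |λ_i − λ_j|` and `dv(x)` the Euclidean distance
from `x` in the standard `k`-simplex to the nearest vertex,
`δ(λ)² · dv(x)² / 2 ≤ ∑_{i<j} x_i x_j (λ_i − λ_j)²`. Here `δ` is quantified as any
nonnegative lower bound of the `|λ_i − λ_j|`, which includes the minimum itself. -/
theorem stmt1 (k : ℕ) (hk : 1 ≤ k) (l : Fin (k + 1) → ℝ) (δ : ℝ) (hδ0 : 0 ≤ δ)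
    (hδ : ∀ i j : Fin (k + 1), i < j → δ ≤ |l i - l j|)
    (x : EuclideanSpace ℝ (Fin (k + 1))) (hx : ∀ i, 0 ≤ x i) (hsum : ∑ i, x i = 1) :
    δ ^ 2 * (⨅ i : Fin (k + 1), dist x (EuclideanSpace.single i (1 : ℝ))) ^ 2 / 2 ≤
      ∑ p ∈ Finset.univ.filter (fun p : Fin (k + 1) × Fin (k + 1) => p.1 < p.2),
        x p.1 * x p.2 * (l p.1 - l p.2) ^ 2 :=
  stmt1_general k l δ hδ0 hδ x hx hsum
end

section
/- Let λ = (λ_0, …, λ_k) ∈ ℝ^{k+1} with the λ_i pairwise distinct, and let X_λ(x) be the vector whose i-th coordinate is λ_i x_i − (∑_j λ_j x_j) x_i. Then for x in the standard k-simplex, X_λ(x) = 0 if and only if x is a vertex of the simplex (i.e., a standard basis vector). -/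
/-! A zero `x` of `X_λ` satisfies `λ_i x_i = c x_i` with `c = ∑ λ_j x_j`, i.e. it is an eigenvector
of `diag λ`. Since the `λ_i` are distinct, `x` is supported at a single coordinate, and the
coordinates summing to `1` make it a vertex. Conversely at `e_i` the weighted sum is `λ_i`. -/

open Finset

variable {ι R : Type*}

theorem Function.Injective.eq_of_mul_eq_mul_of_ne_zero [MonoidWithZero R] [IsRightCancelMulZero R]
    {l x : ι → R} (hl : Function.Injective l) {c : R} (h : ∀ i, l i * x i = c * x i)
    {i j : ι} (hi : x i ≠ 0) (hj : x j ≠ 0) : i = j :=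
  hl ((mul_right_cancel₀ hi (h i)).trans (mul_right_cancel₀ hj (h j)).symm)

theorem exists_eq_ite_of_sum_eq_one [Fintype ι] [DecidableEq ι] [AddCommMonoidWithOne R]
    [NeZero (1 : R)] {x : ι → R} (hsum : ∑ i, x i = 1)
    (hsupp : ∀ i j, x i ≠ 0 → x j ≠ 0 → i = j) :
    ∃ i, x = fun j => if j = i then 1 else 0 := by
  obtain ⟨i, -, hi⟩ := exists_ne_zero_of_sum_ne_zero (hsum.trans_ne one_ne_zero)
  have hzero : ∀ j, j ≠ i → x j = 0 := fun j hji => by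
    by_contra hj
    exact hji (hsupp j i hj hi)
  have hone : x i = 1 := by
    rwa [sum_eq_single i (fun j _ => hzero j) (by simp)] at hsum
  refine ⟨i, funext fun j => ?_⟩
  split_ifs with hji
  · rwa [hji]
  · exact hzero j hji

theorem sum_mul_ite_eq [Fintype ι] [DecidableEq ι] [NonAssocSemiring R] (l : ι → R) (i : ι) :
    ∑ j, l j * (if j = i then 1 else 0) = l i := by
  simp

theorem stmt3_general (k : ℕ) (l : Fin (k + 1) → ℝ) (hl : Function.Injective l)
    (x : Fin (k + 1) → ℝ) (hsum : ∑ i, x i = 1) :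
    (∀ i, l i * x i - (∑ j, l j * x j) * x i = 0) ↔
      ∃ i : Fin (k + 1), x = fun j => if j = i then (1 : ℝ) else 0 := by
  constructor
  · intro h
    have heigen : ∀ i, l i * x i = (∑ j, l j * x j) * x i := fun i => sub_eq_zero.mp (h i)
    exact exists_eq_ite_of_sum_eq_one hsum fun i j => hl.eq_of_mul_eq_mul_of_ne_zero heigen
  · rintro ⟨i, rfl⟩ j
    rw [sum_mul_ite_eq]
    by_cases hji : j = i <;> simp [hji]

/-- If the `λ_i` are pairwise distinct, then for `x` in the standard
`k`-simplex the vector `X_λ(x)` (with coordinates `λ_i x_i − (∑_j λ_j x_j) x_i`)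
vanishes if and only if `x` is a vertex of the simplex (a standard basis vector). -/
theorem stmt3 (k : ℕ) (l : Fin (k + 1) → ℝ) (hl : Function.Injective l)
    (x : Fin (k + 1) → ℝ) (hx : ∀ i, 0 ≤ x i) (hsum : ∑ i, x i = 1) :
    (∀ i, l i * x i - (∑ j, l j * x j) * x i = 0) ↔
      ∃ i : Fin (k + 1), x = fun j => if j = i then (1 : ℝ) else 0 :=
  stmt3_general k l hl x hsum
end
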